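/- Let k ≥ 2. If G1 and G2 are k-critical graphs, and G is a Hajós join of G1 and G2 that has maximum degree k, then G is also k-critical. -/

import Mathlib

/-- A proper edge coloring of `G` with `n` colors: edges sharing an endpoint
get distinct colors. -/
def EdgeColorable {V : Type*} (G : SimpleGraph V) (n : ℕ) : Prop :=
  ∃ C : G.edgeSet → Fin n, ∀ e₁ e₂ : G.edgeSet, e₁ ≠ e₂ →
    (∃ v, v ∈ (e₁ : Sym2 V) ∧ v ∈ (e₂ : Sym2 V)) → C e₁ ≠ C e₂

/-- The chromatic index (edge chromatic number) of `G`. -/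
noncomputable def chromIndex {V : Type*} (G : SimpleGraph V) : ℕ :=
  sInf {n | EdgeColorable G n}

/-- The degree of a vertex. -/
noncomputable def deg {V : Type*} (G : SimpleGraph V) (v : V) : ℕ :=
  (G.neighborSet v).ncard

/-- A graph with maximum degree `k` is `k`-critical if `χ'(G) = k + 1` and
`χ'(G - e) = k` for every edge `e`. -/
def IsCritical {V : Type*} (k : ℕ) (G : SimpleGraph V) : Prop :=
  (∀ v, deg G v ≤ k) ∧ (∃ v, deg G v = k) ∧
  chromIndex G = k + 1 ∧
  ∀ e ∈ G.edgeSet, chromIndex (G.deleteEdges {e}) = k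

/-- The Hajós join of `G₁` and `G₂` along edges `v₁v₂` and `v₃v₄`: delete the
two edges, identify `v₁` with `v₃`, and add the edge `v₂v₄`. -/
def hajosJoin {V₁ V₂ : Type*} (G₁ : SimpleGraph V₁) (G₂ : SimpleGraph V₂)
    (v₁ v₂ : V₁) (v₃ v₄ : V₂) :
    SimpleGraph (V₁ ⊕ {x : V₂ // x ≠ v₃}) :=
  SimpleGraph.fromRel fun a b =>
    match a, b with
    | Sum.inl x, Sum.inl y => G₁.Adj x y ∧ s(x, y) ≠ s(v₁, v₂)
    | Sum.inl x, Sum.inr y => (x = v₁ ∧ G₂.Adj v₃ y.1 ∧ y.1 ≠ v₄) ∨ (x = v₂ ∧ y.1 = v₄)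
    | Sum.inr _, Sum.inl _ => False
    | Sum.inr x, Sum.inr y => G₂.Adj x.1 y.1 ∧ s(x.1, y.1) ≠ s(v₃, v₄)

/-- `G` is a Hajós join of `G₁` and `G₂`. -/
def IsHajosJoin {W V₁ V₂ : Type*} (G : SimpleGraph W)
    (G₁ : SimpleGraph V₁) (G₂ : SimpleGraph V₂) : Prop :=
  ∃ (v₁ v₂ : V₁) (v₃ v₄ : V₂), G₁.Adj v₁ v₂ ∧ G₂.Adj v₃ v₄ ∧
    Nonempty (G ≃g hajosJoin G₁ G₂ v₁ v₂ v₃ v₄)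

/-- Vertices of the Petersen graph: 2-element subsets of a 5-element set. -/
abbrev KVert : Type := {s : Finset (Fin 5) // s.card = 2}

/-- The Petersen graph, as the Kneser graph K(5,2). -/
def Petersen : SimpleGraph KVert where
  Adj a b := Disjoint a.1 b.1
  symm := ⟨fun a b h => h.symm⟩
  loopless := ⟨fun (a : KVert) h => by
    have h2 := a.2
    have h' : (a.1 : Finset (Fin 5)) = ∅ := disjoint_self.mp h
    rw [h'] at h2
    simp at h2⟩

/-- A fixed vertex of the Petersen graph. -/
def pstarV : KVert := ⟨{0, 1}, by decide⟩

/-- The vertex set of the Petersen graph minus one vertex. -/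
abbrev PV : Type := {x : KVert // x ≠ pstarV}

/-- `P*`: the Petersen graph with one vertex deleted. -/
def PStar : SimpleGraph PV where
  Adj a b := Petersen.Adj a.1 b.1
  symm := ⟨fun a b h => Petersen.adj_symm h⟩
  loopless := ⟨fun a h => Petersen.irrefl h⟩

/-!
Inside the vertex type of the join, `G₁` and `G₂` become graphs `A` and `B` that meet only in the
identified vertex `u`, and the join is `(A - ua) ⊔ (B - ub) ⊔ ab`.

In a proper `k`-edge-colouring of the join, the colour of `ab` is missing at `a` in `A - ua`. As `A`
is not `k`-edge-colourable it must then appear at `u` (otherwise it could colour `ua`), and in the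
same way it appears at `u` in `B - ub`: twice at `u`, a contradiction.

After deleting an edge `e`, glue a `k`-colouring of `A - e` (of `A - ua` if `e = ab`) to one of
`B - ub`, permuting the colours of the latter so that the colour sets at `u` become disjoint; the
degree bound at `u` leaves room for this. When `e ≠ ab`, a colour `δ` missing at `b` in `B - ub` is
present at `u` by criticality of `B`, and the permutation is chosen to send `δ` to the colour of
`ua`, which is then free at both `a` and `b` for the edge `ab`. Edges of `B` are handled by the
symmetry of the construction.
-/

theorem Equiv.Perm.exists_disjoint_image {α : Type*} [Finite α] {S T : Set α}
    (h : S.ncard + T.ncard ≤ Nat.card α) : ∃ π : Perm α, _root_.Disjoint (π '' S) T := by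
  obtain ⟨U, hUT, hU⟩ := Set.exists_subset_card_eq (s := Tᶜ) (n := S.ncard)
    (by rw [Set.ncard_compl]; omega)
  obtain ⟨e⟩ : Nonempty (S ≃ U) := Finite.card_eq.1 (by simp [hU])
  obtain ⟨π, hπ⟩ := Perm.exists_extending_pair (fun s : S => (s : α)) (fun s => (e s : α))
    Subtype.val_injective (Subtype.val_injective.comp e.injective)
  refine ⟨π, Set.disjoint_left.2 ?_⟩
  rintro _ ⟨s, hs, rfl⟩
  exact hUT ((hπ ⟨s, hs⟩).symm ▸ (e ⟨s, hs⟩).2)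

theorem Equiv.Perm.exists_apply_eq_disjoint_image {α : Type*} [Finite α] {S T : Set α}
    {y x : α} (hy : y ∈ S) (hx : x ∉ T) (h : S.ncard + T.ncard ≤ Nat.card α) :
    ∃ π : Perm α, π y = x ∧ _root_.Disjoint (π '' S) T := by
  classical
  obtain ⟨π, hπ⟩ := exists_disjoint_image h
  have hπy : π y ∉ T := Set.disjoint_left.1 hπ (Set.mem_image_of_mem π hy)
  refine ⟨(swap (π y) x) * π, by simp, Set.disjoint_left.2 ?_⟩
  rintro _ ⟨s, hs, rfl⟩
  have hπs : π s ∉ T := Set.disjoint_left.1 hπ (Set.mem_image_of_mem π hs)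
  rw [Perm.mul_apply, swap_apply_def]
  split_ifs <;> assumption

namespace SimpleGraph

variable {V α : Type*} {G H : SimpleGraph V} {c c' : Sym2 V → α} {u v a b : V}

-- Colourings are total functions on `Sym2 V`, so that two of them can be glued with
-- `Set.piecewise`; only their values on edges matter.
def IsProperEdgeColoring (G : SimpleGraph V) (c : Sym2 V → α) : Prop :=
  ∀ v, Set.InjOn (fun w => c s(v, w)) (G.neighborSet v)

def edgeColorsAt (G : SimpleGraph V) (c : Sym2 V → α) (v : V) : Set α :=
  (fun w => c s(v, w)) '' G.neighborSet v

theorem IsProperEdgeColoring.anti (h : H ≤ G) (hc : G.IsProperEdgeColoring c) :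
    H.IsProperEdgeColoring c :=
  fun v => (hc v).mono (neighborSet_mono h v)

theorem IsProperEdgeColoring.comp {β : Type*} {f : α → β} (hf : Function.Injective f)
    (hc : G.IsProperEdgeColoring c) : G.IsProperEdgeColoring (f ∘ c) :=
  fun v => hf.comp_injOn (hc v)

theorem IsProperEdgeColoring.edgeColorable {n : ℕ} {c : Sym2 V → Fin n}
    (hc : G.IsProperEdgeColoring c) : EdgeColorable G n := by
  refine ⟨fun e => c e, fun ⟨e₁, he₁⟩ ⟨e₂, he₂⟩ hne ⟨v, hv₁, hv₂⟩ hc₁₂ => hne ?_⟩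
  obtain ⟨w₁, rfl⟩ := Sym2.mem_iff_exists.1 hv₁
  obtain ⟨w₂, rfl⟩ := Sym2.mem_iff_exists.1 hv₂
  obtain rfl : w₁ = w₂ := hc v he₁ he₂ hc₁₂
  rfl

theorem _root_.EdgeColorable.exists_isProperEdgeColoring {n : ℕ} [NeZero n]
    (h : EdgeColorable G n) : ∃ c : Sym2 V → Fin n, G.IsProperEdgeColoring c := by
  classical
  obtain ⟨C, hC⟩ := h
  refine ⟨fun e => if he : e ∈ G.edgeSet then C ⟨e, he⟩ else 0, fun v w hw w' hw' hcw => ?_⟩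
  by_contra hne
  have hw₁ : s(v, w) ∈ G.edgeSet := hw
  have hw₂ : s(v, w') ∈ G.edgeSet := hw'
  refine hC ⟨_, hw₁⟩ ⟨_, hw₂⟩ (fun h => hne (Sym2.congr_right.1 (Subtype.ext_iff.1 h)))
    ⟨v, by simp, by simp⟩ ?_
  simpa [hw₁, hw₂] using hcw

theorem edgeColorsAt_comp {β : Type*} (f : α → β) :
    G.edgeColorsAt (f ∘ c) v = f '' G.edgeColorsAt c v := by
  simp [edgeColorsAt, Set.image_image]

theorem edgeColorsAt_eq_empty_of_notMem_support (hv : v ∉ G.support) :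
    G.edgeColorsAt c v = ∅ := by
  simp only [edgeColorsAt, Set.image_eq_empty]
  exact Set.eq_empty_of_forall_notMem fun w hw => hv ⟨w, hw⟩

theorem IsProperEdgeColoring.notMem_edgeColorsAt {w : V} (hc : G.IsProperEdgeColoring c)
    (hH : H ≤ G) (hvw : G.Adj v w) (hw : ¬H.Adj v w) : c s(v, w) ∉ H.edgeColorsAt c v := by
  rintro ⟨x, hx, hcx⟩
  obtain rfl : x = w := hc v (hH hx) hvw hcx
  exact hw hx

theorem IsProperEdgeColoring.piecewise_sup [DecidablePred (· ∈ G.edgeSet)]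
    (hG : G.IsProperEdgeColoring c) (hH : H.IsProperEdgeColoring c')
    (hdisj : ∀ v, Disjoint (G.edgeColorsAt c v) (H.edgeColorsAt c' v)) :
    (G ⊔ H).IsProperEdgeColoring (G.edgeSet.piecewise c c') := by
  intro v w hw w' hw' hcw
  simp only [Set.piecewise, mem_edgeSet] at hcw
  split_ifs at hcw with hGw hGw' hGw'
  · exact hG v hGw hGw' hcw
  · exact (Set.disjoint_left.1 (hdisj v) ⟨w, hGw, rfl⟩
      ⟨w', hw'.resolve_left hGw', hcw.symm⟩).elim
  · exact (Set.disjoint_left.1 (hdisj v) ⟨w', hGw', rfl⟩ ⟨w, hw.resolve_left hGw, hcw⟩).elim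
  · exact hH v (hw.resolve_left hGw) (hw'.resolve_left hGw') hcw

theorem edgeColorsAt_sup_piecewise_subset [DecidablePred (· ∈ G.edgeSet)] :
    (G ⊔ H).edgeColorsAt (G.edgeSet.piecewise c c') v ⊆
      G.edgeColorsAt c v ∪ H.edgeColorsAt c' v := by
  rintro _ ⟨w, hw, rfl⟩
  by_cases hGw : G.Adj v w
  · exact .inl ⟨w, hGw, (Set.piecewise_eq_of_mem _ _ _ ((G.mem_edgeSet).2 hGw)).symm⟩
  · exact .inr ⟨w, hw.resolve_left hGw,
      (Set.piecewise_eq_of_notMem _ _ _ (mt (G.mem_edgeSet).1 hGw)).symm⟩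

theorem IsProperEdgeColoring.piecewise_sup_of_support [DecidablePred (· ∈ G.edgeSet)]
    (hsupp : G.support ∩ H.support ⊆ {u})
    (hG : G.IsProperEdgeColoring c) (hH : H.IsProperEdgeColoring c')
    (hu : Disjoint (G.edgeColorsAt c u) (H.edgeColorsAt c' u)) :
    (G ⊔ H).IsProperEdgeColoring (G.edgeSet.piecewise c c') := by
  refine hG.piecewise_sup hH fun v => ?_
  by_cases hvu : v = u
  · exact hvu ▸ hu
  by_cases hv : v ∈ G.support
  · rw [edgeColorsAt_eq_empty_of_notMem_support fun hv' => hvu (hsupp ⟨hv, hv'⟩)]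
    exact Set.disjoint_empty _
  · rw [edgeColorsAt_eq_empty_of_notMem_support hv]
    exact Set.empty_disjoint _

theorem isProperEdgeColoring_edge_const (γ : α) :
    (edge a b).IsProperEdgeColoring fun _ => γ := by
  intro v w hw w' hw' _
  simp only [mem_neighborSet, edge_adj] at hw hw'
  grind

theorem mem_edgeColorsAt_edge_const {γ x : α}
    (hx : x ∈ (edge a b).edgeColorsAt (fun _ => γ) v) : x = γ ∧ (v = a ∨ v = b) := by
  obtain ⟨w, hw, rfl⟩ := hx
  simp only [mem_neighborSet, edge_adj] at hw
  grind

theorem IsProperEdgeColoring.piecewise_sup_edge [DecidablePred (· ∈ G.edgeSet)] {γ : α}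
    (hc : G.IsProperEdgeColoring c) (ha : γ ∉ G.edgeColorsAt c a)
    (hb : γ ∉ G.edgeColorsAt c b) :
    (G ⊔ edge a b).IsProperEdgeColoring (G.edgeSet.piecewise c fun _ => γ) := by
  refine hc.piecewise_sup (isProperEdgeColoring_edge_const γ) fun v => Set.disjoint_right.2 ?_
  intro x hx
  obtain ⟨rfl, rfl | rfl⟩ := mem_edgeColorsAt_edge_const hx
  exacts [ha, hb]

theorem IsProperEdgeColoring.piecewise_sup_sup_edge [DecidablePred (· ∈ G.edgeSet)]
    [DecidablePred (· ∈ (G ⊔ H).edgeSet)] {β : α} (hsupp : G.support ∩ H.support ⊆ {u})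
    (ha : a ∉ H.support) (hb : b ∉ G.support)
    (hG : G.IsProperEdgeColoring c) (hH : H.IsProperEdgeColoring c')
    (hu : Disjoint (G.edgeColorsAt c u) (H.edgeColorsAt c' u))
    (hβa : β ∉ G.edgeColorsAt c a) (hβb : β ∉ H.edgeColorsAt c' b) :
    (G ⊔ H ⊔ edge a b).IsProperEdgeColoring
      ((G ⊔ H).edgeSet.piecewise (G.edgeSet.piecewise c c') fun _ => β) := by
  refine (hG.piecewise_sup_of_support hsupp hH hu).piecewise_sup_edge
    (fun h => (edgeColorsAt_sup_piecewise_subset h).elim hβa fun h' => ?_)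
    (fun h => (edgeColorsAt_sup_piecewise_subset h).elim (fun h' => ?_) hβb)
  · rwa [edgeColorsAt_eq_empty_of_notMem_support ha] at h'
  · rwa [edgeColorsAt_eq_empty_of_notMem_support hb] at h'

theorem le_deleteEdges_sup_edge (a b : V) : G ≤ G.deleteEdges {s(a, b)} ⊔ edge a b := by
  rw [sup_comm]
  exact (deleteEdges_le_iff _ _).1 le_rfl

theorem mem_edgeColorsAt_of_not_edgeColorable {n : ℕ} {c : Sym2 V → Fin n} {γ : Fin n}
    (hG : ¬EdgeColorable G n) (hc : (G.deleteEdges {s(a, b)}).IsProperEdgeColoring c)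
    (hγ : γ ∉ (G.deleteEdges {s(a, b)}).edgeColorsAt c b) :
    γ ∈ (G.deleteEdges {s(a, b)}).edgeColorsAt c a := by
  classical
  by_contra hγa
  exact hG ((hc.piecewise_sup_edge hγa hγ).anti (le_deleteEdges_sup_edge a b)).edgeColorable

theorem _root_.EdgeColorable.succ_of_deleteEdges {n : ℕ} {e : Sym2 V}
    (h : EdgeColorable (G.deleteEdges {e}) n) : EdgeColorable G (n + 1) := by
  classical
  induction e with | _ a b =>
  obtain ⟨C, hC⟩ := h
  let c : Sym2 V → Fin (n + 1) := fun e =>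
    if he : e ∈ (G.deleteEdges {s(a, b)}).edgeSet then (C ⟨e, he⟩).castSucc else Fin.last n
  have hcC : ∀ e (he : e ∈ (G.deleteEdges {s(a, b)}).edgeSet), c e = (C ⟨e, he⟩).castSucc :=
    fun e he => dif_pos he
  have hc : (G.deleteEdges {s(a, b)}).IsProperEdgeColoring c := by
    intro v w hw w' hw' hcw
    by_contra hne
    refine hC ⟨s(v, w), hw⟩ ⟨s(v, w'), hw'⟩
      (fun h => hne (Sym2.congr_right.1 (Subtype.ext_iff.1 h))) ⟨v, by simp, by simp⟩ ?_
    exact Fin.castSucc_injective _ ((hcC _ hw).symm.trans (hcw.trans (hcC _ hw')))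
  have hlast : ∀ v, Fin.last n ∉ (G.deleteEdges {s(a, b)}).edgeColorsAt c v := by
    rintro v ⟨w, hw, hcw⟩
    exact Fin.castSucc_ne_last _ ((hcC _ hw).symm.trans hcw)
  exact ((hc.piecewise_sup_edge (hlast a) (hlast b)).anti
    (le_deleteEdges_sup_edge a b)).edgeColorable

theorem _root_.EdgeColorable.mono {m n : ℕ} (h : EdgeColorable G m) (hmn : m ≤ n) :
    EdgeColorable G n := by
  obtain ⟨C, hC⟩ := h
  exact ⟨fun e => Fin.castLE hmn (C e),
    fun e₁ e₂ hne hsh heq => hC e₁ e₂ hne hsh (Fin.castLE_injective hmn heq)⟩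

theorem edgeColorable_iff_chromIndex_le {n : ℕ} (hG : ∃ m, EdgeColorable G m) :
    EdgeColorable G n ↔ chromIndex G ≤ n :=
  ⟨fun h => Nat.sInf_le h, fun h => EdgeColorable.mono (Nat.sInf_mem hG) h⟩

theorem exists_mem_edgeSet_of_not_edgeColorable {n : ℕ} (hG : ¬EdgeColorable G n) :
    ∃ e, e ∈ G.edgeSet := by
  by_contra! h
  exact hG ⟨fun e => (h e e.2).elim, fun e => (h e e.2).elim⟩

theorem _root_.isCritical_iff {k : ℕ} [NeZero k] :
    IsCritical k G ↔ (∀ v, deg G v ≤ k) ∧ (∃ v, deg G v = k) ∧ ¬EdgeColorable G k ∧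
      ∀ e ∈ G.edgeSet, EdgeColorable (G.deleteEdges {e}) k := by
  refine ⟨fun ⟨hdeg, hdeg', hG, hdel⟩ => ⟨hdeg, hdeg', fun h => ?_, fun e he => ?_⟩,
    fun ⟨hdeg, hdeg', hG, hdel⟩ => ⟨hdeg, hdeg', ?_, fun e he => ?_⟩⟩
  · have := Nat.sInf_le (s := {n | EdgeColorable G n}) h
    rw [← chromIndex, hG] at this
    omega
  · have hne : ∃ m, EdgeColorable (G.deleteEdges {e}) m := by
      by_contra! h
      have := hdel e he
      rw [chromIndex, show {n | EdgeColorable (G.deleteEdges {e}) n} = ∅ from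
        Set.eq_empty_of_forall_notMem h, Nat.sInf_empty] at this
      exact NeZero.ne k this.symm
    exact (edgeColorable_iff_chromIndex_le hne).2 (hdel e he).le
  · obtain ⟨e, he⟩ := exists_mem_edgeSet_of_not_edgeColorable hG
    have hcol : EdgeColorable G (k + 1) := EdgeColorable.succ_of_deleteEdges (hdel e he)
    have := mt (edgeColorable_iff_chromIndex_le ⟨_, hcol⟩).2 hG
    have := (edgeColorable_iff_chromIndex_le ⟨_, hcol⟩).1 hcol
    omega
  · have hle := (edgeColorable_iff_chromIndex_le ⟨_, hdel e he⟩).1 (hdel e he)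
    by_contra hne
    have hsucc := EdgeColorable.succ_of_deleteEdges ((edgeColorable_iff_chromIndex_le
      ⟨_, hdel e he⟩).2 (show chromIndex (G.deleteEdges {e}) ≤ k - 1 by omega))
    exact hG (by rwa [Nat.sub_add_cancel NeZero.one_le] at hsucc)

section Degree

variable [Finite V]

theorem deg_mono (h : H ≤ G) (v : V) : deg H v ≤ deg G v :=
  Set.ncard_le_ncard (neighborSet_mono h v)

theorem deg_deleteEdges_lt (h : G.Adj u v) : deg (G.deleteEdges {s(u, v)}) v < deg G v :=
  Set.ncard_lt_ncard ((Set.ssubset_iff_of_subset (neighborSet_mono (deleteEdges_le _) v)).2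
    ⟨u, h.symm, by simp [Sym2.eq_swap]⟩)

theorem ncard_edgeColorsAt_le : (G.edgeColorsAt c v).ncard ≤ deg G v :=
  Set.ncard_image_le (Set.toFinite _)

theorem exists_notMem_edgeColorsAt_of_deg_lt {k : ℕ} {c : Sym2 V → Fin k}
    (h : deg G v < k) : ∃ δ, δ ∉ G.edgeColorsAt c v := by
  by_contra! hall
  have := (ncard_edgeColorsAt_le (c := c)).trans_lt h
  rw [Set.eq_univ_of_forall hall, Set.ncard_univ, Nat.card_eq_fintype_card,
    Fintype.card_fin] at this
  exact this.false

theorem exists_notMem_edgeColorsAt_mem_edgeColorsAt {k : ℕ} {c : Sym2 V → Fin k}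
    (hG : ¬EdgeColorable G k) (hub : G.Adj u b) (hb : deg G b ≤ k)
    (hc : (G.deleteEdges {s(u, b)}).IsProperEdgeColoring c) :
    ∃ δ, δ ∉ (G.deleteEdges {s(u, b)}).edgeColorsAt c b ∧
      δ ∈ (G.deleteEdges {s(u, b)}).edgeColorsAt c u := by
  obtain ⟨δ, hδ⟩ := exists_notMem_edgeColorsAt_of_deg_lt (c := c)
    ((deg_deleteEdges_lt hub).trans_le hb)
  exact ⟨δ, hδ, mem_edgeColorsAt_of_not_edgeColorable hG hc hδ⟩

end Degree

section HajosSup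

variable {A B : SimpleGraph V} {k : ℕ} {e : Sym2 V}

-- The Hajós join when `A` and `B` already live on a common vertex set and meet only in `u`
-- (the identified vertex `v₁ = v₃`), with `a = v₂` and `b = v₄`.
def hajosSup (A B : SimpleGraph V) (u a b : V) : SimpleGraph V :=
  A.deleteEdges {s(u, a)} ⊔ B.deleteEdges {s(u, b)} ⊔ edge a b

theorem hajosSup_comm : hajosSup A B u a b = hajosSup B A u b a := by
  rw [hajosSup, hajosSup, sup_comm (A.deleteEdges _), edge_comm]

theorem mem_edgeSet_hajosSup (he : e ∈ (hajosSup A B u a b).edgeSet) :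
    (e ∈ A.edgeSet ∧ e ≠ s(u, a)) ∨ (e ∈ B.edgeSet ∧ e ≠ s(u, b)) ∨ e = s(a, b) := by
  induction e with | _ x y =>
  simp only [hajosSup, mem_edgeSet, sup_adj, deleteEdges_adj, edge_adj,
    Set.mem_singleton_iff] at he ⊢
  rcases he with (he | he) | ⟨hxy | hxy, -⟩
  · exact .inl he
  · exact .inr (.inl he)
  · exact .inr (.inr (by rw [hxy.1, hxy.2]))
  · exact .inr (.inr (by rw [hxy.1, hxy.2, Sym2.eq_swap]))

theorem notMem_support_of_adj_right (hAB : A.support ∩ B.support ⊆ {u}) (hub : B.Adj u b) :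
    b ∉ A.support :=
  fun hb => hub.ne (hAB ⟨hb, u, hub.symm⟩ : b = u).symm

theorem disjoint_of_support (hAB : A.support ∩ B.support ⊆ {u}) : Disjoint A B := by
  refine disjoint_neighborSet.1 fun v => Set.disjoint_left.2 fun w hA hB => ?_
  have hv : v = u := hAB ⟨⟨w, hA⟩, ⟨w, hB⟩⟩
  have hw : w = u := hAB ⟨⟨v, hA.symm⟩, ⟨v, hB.symm⟩⟩
  exact hA.ne (hv.trans hw.symm)

theorem deg_add_deg_le_deg_hajosSup [Finite V] (hAB : A.support ∩ B.support ⊆ {u}) :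
    deg (A.deleteEdges {s(u, a)}) u + deg (B.deleteEdges {s(u, b)}) u ≤
      deg (hajosSup A B u a b) u := by
  have hdisj := disjoint_neighborSet.2 ((disjoint_of_support hAB).mono
    (deleteEdges_le {s(u, a)}) (deleteEdges_le {s(u, b)})) u
  rw [deg, deg, ← Set.ncard_union_eq hdisj, ← neighborSet_sup]
  exact Set.ncard_le_ncard (neighborSet_mono le_sup_left u)

theorem ncard_edgeColorsAt_add_ncard_edgeColorsAt_le [Finite V] {A' B' : SimpleGraph V}
    (hAB : A.support ∩ B.support ⊆ {u}) (hA' : A' ≤ A.deleteEdges {s(u, a)})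
    (hB' : B' ≤ B.deleteEdges {s(u, b)}) (c₁ c₂ : Sym2 V → α) :
    (A'.edgeColorsAt c₁ u).ncard + (B'.edgeColorsAt c₂ u).ncard ≤
      deg (hajosSup A B u a b) u :=
  (add_le_add (ncard_edgeColorsAt_le.trans (deg_mono hA' u))
    (ncard_edgeColorsAt_le.trans (deg_mono hB' u))).trans (deg_add_deg_le_deg_hajosSup hAB)

theorem not_edgeColorable_hajosSup [NeZero k] (hAB : A.support ∩ B.support ⊆ {u})
    (hA : ¬EdgeColorable A k) (hB : ¬EdgeColorable B k) (hua : A.Adj u a) (hub : B.Adj u b) :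
    ¬EdgeColorable (hajosSup A B u a b) k := by
  intro hH
  obtain ⟨ρ, hρ⟩ := hH.exists_isProperEdgeColoring
  have hA_le : A.deleteEdges {s(u, a)} ≤ hajosSup A B u a b := le_sup_left.trans le_sup_left
  have hB_le : B.deleteEdges {s(u, b)} ≤ hajosSup A B u a b := le_sup_right.trans le_sup_left
  have hb : b ∉ A.support := notMem_support_of_adj_right hAB hub
  have ha : a ∉ B.support :=
    notMem_support_of_adj_right ((Set.inter_comm _ _).trans_subset hAB) hua
  have hab : (hajosSup A B u a b).Adj a b :=
    .inr ((edge_adj ..).2 ⟨.inl ⟨rfl, rfl⟩, fun h => hb (h ▸ ⟨u, hua.symm⟩)⟩)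
  obtain ⟨w₁, hw₁, h₁⟩ := mem_edgeColorsAt_of_not_edgeColorable hA (hρ.anti hA_le)
    (hρ.notMem_edgeColorsAt hA_le hab fun h => hb ⟨a, h.1.symm⟩)
  obtain ⟨w₂, hw₂, h₂⟩ := mem_edgeColorsAt_of_not_edgeColorable hB (hρ.anti hB_le)
    (hρ.notMem_edgeColorsAt hB_le hab.symm fun h => ha ⟨b, h.1.symm⟩)
  obtain rfl : w₁ = w₂ :=
    hρ u (hA_le hw₁) (hB_le hw₂) (h₁.trans ((congrArg ρ Sym2.eq_swap).trans h₂.symm))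
  exact (disjoint_of_support hAB).le_bot ⟨hw₁.1, hw₂.1⟩

theorem edgeColorable_hajosSup_deleteEdges_edge [Finite V] [NeZero k]
    (hAB : A.support ∩ B.support ⊆ {u}) (hA : EdgeColorable (A.deleteEdges {s(u, a)}) k)
    (hB : EdgeColorable (B.deleteEdges {s(u, b)}) k) (hdeg : deg (hajosSup A B u a b) u ≤ k) :
    EdgeColorable ((hajosSup A B u a b).deleteEdges {s(a, b)}) k := by
  classical
  obtain ⟨c₁, hc₁⟩ := hA.exists_isProperEdgeColoring
  obtain ⟨c₂, hc₂⟩ := hB.exists_isProperEdgeColoring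
  have hcount := (ncard_edgeColorsAt_add_ncard_edgeColorsAt_le hAB le_rfl le_rfl c₁ c₂).trans hdeg
  obtain ⟨π, hπ⟩ :=
    Equiv.Perm.exists_disjoint_image (((add_comm _ _).trans_le hcount).trans_eq (by simp))
  have hsupp : (A.deleteEdges {s(u, a)}).support ∩ (B.deleteEdges {s(u, b)}).support ⊆ {u} :=
    (Set.inter_subset_inter (support_mono (deleteEdges_le _))
      (support_mono (deleteEdges_le _))).trans hAB
  refine ((hc₁.piecewise_sup_of_support hsupp (hc₂.comp π.injective) ?_).anti ?_).edgeColorable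
  · rw [edgeColorsAt_comp]
    exact hπ.symm
  · rw [hajosSup, deleteEdges_le_iff]
    exact sup_le le_sup_right le_sup_left

theorem edgeColorable_hajosSup_deleteEdges_left [Finite V] [NeZero k]
    (hAB : A.support ∩ B.support ⊆ {u}) (hB : ¬EdgeColorable B k) (hub : B.Adj u b)
    (he : e ≠ s(u, a)) (hAe : EdgeColorable (A.deleteEdges {e}) k)
    (hB' : EdgeColorable (B.deleteEdges {s(u, b)}) k) (hua : A.Adj u a)
    (hdeg : deg (hajosSup A B u a b) u ≤ k) (hdegb : deg B b ≤ k) :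
    EdgeColorable ((hajosSup A B u a b).deleteEdges {e}) k := by
  classical
  set A' := (A.deleteEdges {s(u, a)}).deleteEdges {e}
  set B' := B.deleteEdges {s(u, b)}
  have hA'_le : A' ≤ A.deleteEdges {e} := deleteEdges_mono (deleteEdges_le _)
  have hA'ua : ¬A'.Adj u a := by simp [A']
  have hAeua : (A.deleteEdges {e}).Adj u a := by simpa [hua] using he.symm
  obtain ⟨c₁, hc₁⟩ := hAe.exists_isProperEdgeColoring
  obtain ⟨c₂, hc₂⟩ := hB'.exists_isProperEdgeColoring
  obtain ⟨δ, hδb, hδu⟩ := exists_notMem_edgeColorsAt_mem_edgeColorsAt hB hub hdegb hc₂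
  have hαu : c₁ s(u, a) ∉ A'.edgeColorsAt c₁ u := hc₁.notMem_edgeColorsAt hA'_le hAeua hA'ua
  have hαa : c₁ s(u, a) ∉ A'.edgeColorsAt c₁ a := Sym2.eq_swap (a := u) ▸
    hc₁.notMem_edgeColorsAt hA'_le hAeua.symm fun h => hA'ua h.symm
  have hcount := (ncard_edgeColorsAt_add_ncard_edgeColorsAt_le (A' := A') (B' := B') hAB
    (deleteEdges_le _) le_rfl c₁ c₂).trans hdeg
  obtain ⟨π, hπδ, hπ⟩ :=
    Equiv.Perm.exists_apply_eq_disjoint_image hδu hαu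
      (((add_comm _ _).trans_le hcount).trans_eq (by simp))
  have hsupp : A'.support ∩ B'.support ⊆ {u} :=
    (Set.inter_subset_inter (support_mono ((deleteEdges_le _).trans (deleteEdges_le _)))
      (support_mono (deleteEdges_le _))).trans hAB
  have haB : a ∉ B'.support := fun h => notMem_support_of_adj_right
    ((Set.inter_comm _ _).trans_subset hAB) hua (support_mono (deleteEdges_le _) h)
  have hbA : b ∉ A'.support := fun h => notMem_support_of_adj_right hAB hub
    (support_mono ((deleteEdges_le _).trans (deleteEdges_le _)) h)
  have hαb : c₁ s(u, a) ∉ B'.edgeColorsAt (π ∘ c₂) b := by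
    rw [edgeColorsAt_comp, ← hπδ]
    rintro ⟨x, hx, hπx⟩
    exact hδb (π.injective hπx ▸ hx)
  refine ((IsProperEdgeColoring.piecewise_sup_sup_edge hsupp haB hbA (hc₁.anti hA'_le)
    (hc₂.comp π.injective) (by rw [edgeColorsAt_comp]; exact hπ.symm) hαa hαb).anti
    ?_).edgeColorable
  rw [hajosSup, deleteEdges_sup, deleteEdges_sup]
  exact sup_le_sup (sup_le_sup le_rfl (deleteEdges_le _)) (deleteEdges_le _)

theorem _root_.IsCritical.hajosSup [Finite V] [NeZero k] (hA : IsCritical k A)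
    (hB : IsCritical k B) (hua : A.Adj u a) (hub : B.Adj u b) (hAB : A.support ∩ B.support ⊆ {u})
    (hdeg : ∀ v, deg (hajosSup A B u a b) v ≤ k) (hdeg' : ∃ v, deg (hajosSup A B u a b) v = k) :
    IsCritical k (hajosSup A B u a b) := by
  rw [isCritical_iff] at hA hB ⊢
  obtain ⟨hAdeg, -, hA, hAdel⟩ := hA
  obtain ⟨hBdeg, -, hB, hBdel⟩ := hB
  have hBA : B.support ∩ A.support ⊆ {u} := (Set.inter_comm _ _).trans_subset hAB
  refine ⟨hdeg, hdeg', not_edgeColorable_hajosSup hAB hA hB hua hub, fun e he => ?_⟩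
  rcases mem_edgeSet_hajosSup he with ⟨heA, hne⟩ | ⟨heB, hne⟩ | rfl
  · exact edgeColorable_hajosSup_deleteEdges_left hAB hB hub hne (hAdel e heA) (hBdel _ hub) hua
      (hdeg u) (hBdeg b)
  · rw [hajosSup_comm] at hdeg ⊢
    exact edgeColorable_hajosSup_deleteEdges_left hBA hA hua hne (hBdel e heB) (hAdel _ hua) hub
      (hdeg u) (hAdeg a)
  · exact edgeColorable_hajosSup_deleteEdges_edge hAB (hAdel _ hua) (hBdel _ hub) (hdeg u)

end HajosSup

section Map

variable {W : Type*} {G' : SimpleGraph W} {k : ℕ}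

theorem edgeColorable_map_iff {n : ℕ} [NeZero n] (f : V ↪ W) :
    EdgeColorable (G.map f) n ↔ EdgeColorable G n := by
  refine ⟨fun h => ?_, fun h => ?_⟩
  · obtain ⟨c, hc⟩ := h.exists_isProperEdgeColoring
    refine IsProperEdgeColoring.edgeColorable (c := c ∘ Sym2.map f) fun v w hw w' hw' hcw => ?_
    exact f.injective (hc (f v) (map_adj_apply.2 hw) (map_adj_apply.2 hw') hcw)
  · obtain ⟨c, hc⟩ := h.exists_isProperEdgeColoring
    have hext : ∀ v w, Function.extend (Sym2.map f) c default s(f v, f w) = c s(v, w) :=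
      fun v w => (Sym2.map.injective f.injective).extend_apply c default s(v, w)
    refine IsProperEdgeColoring.edgeColorable (c := Function.extend (Sym2.map f) c default) ?_
    rintro x y ⟨-, v, w, hvw, rfl, rfl⟩ y' ⟨-, v', w', hv'w', hv', rfl⟩ hcw
    obtain rfl : v = v' := (f.injective hv').symm
    dsimp only at hcw
    rw [hext, hext] at hcw
    rw [hc v hvw hv'w' hcw]

theorem map_deleteEdges (f : V ↪ W) (e : Sym2 V) :
    (G.map f).deleteEdges {Sym2.map f e} = (G.deleteEdges {e}).map f := by
  ext x y
  simp only [deleteEdges_adj, map_adj, Set.mem_singleton_iff]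
  constructor
  · rintro ⟨⟨v, w, h, rfl, rfl⟩, hne⟩
    exact ⟨v, w, ⟨h, fun h' => hne (h' ▸ rfl)⟩, rfl, rfl⟩
  · rintro ⟨v, w, ⟨h, hne⟩, rfl, rfl⟩
    exact ⟨⟨v, w, h, rfl, rfl⟩, fun h' => hne (Sym2.map.injective f.injective h')⟩

theorem deg_map (f : V ↪ W) (v : V) : deg (G.map f) (f v) = deg G v := by
  rw [deg, deg, neighborSet_map, Set.ncard_image_of_injective _ f.injective]

theorem deg_map_of_notMem_range (f : V ↪ W) {w : W} (hw : w ∉ Set.range f) :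
    deg (G.map f) w = 0 := by
  have : (G.map f).neighborSet w = ∅ :=
    Set.eq_empty_of_forall_notMem fun _ ⟨_, v, _, _, hv, _⟩ => hw ⟨v, hv⟩
  rw [deg, this, Set.ncard_empty]

theorem _root_.IsCritical.map [NeZero k] (f : V ↪ W) (h : IsCritical k G) :
    IsCritical k (G.map f) := by
  rw [isCritical_iff] at h ⊢
  obtain ⟨hdeg, ⟨v, hv⟩, hG, hdel⟩ := h
  refine ⟨fun w => ?_, ⟨f v, (deg_map f v).trans hv⟩, (edgeColorable_map_iff f).not.2 hG, ?_⟩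
  · by_cases hw : w ∈ Set.range f
    · obtain ⟨v, rfl⟩ := hw
      exact (deg_map f v).trans_le (hdeg v)
    · rw [deg_map_of_notMem_range f hw]
      exact Nat.zero_le k
  · rw [edgeSet_map]
    rintro _ ⟨e, he, rfl⟩
    rw [Function.Embedding.sym2Map_apply, map_deleteEdges, edgeColorable_map_iff]
    exact hdel e he

theorem Iso.map_eq (f : G ≃g G') : G.map f.toEquiv.toEmbedding = G' := by
  ext x y
  rw [map_adj]
  constructor
  · rintro ⟨v, w, h, rfl, rfl⟩
    exact f.map_adj_iff.2 h
  · intro h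
    exact ⟨f.symm x, f.symm y, f.symm.map_adj_iff.2 h, f.apply_symm_apply x,
      f.apply_symm_apply y⟩

theorem Iso.deg_eq (f : G ≃g G') (v : V) : deg G' (f v) = deg G v := by
  rw [← deg_map f.toEquiv.toEmbedding, f.map_eq]
  rfl

end Map

end SimpleGraph

section HajosJoin

open SimpleGraph

variable {V₁ V₂ : Type*} {G₁ : SimpleGraph V₁} {G₂ : SimpleGraph V₂} {v₁ v₂ : V₁} {v₃ v₄ : V₂}

open Classical in
noncomputable def hajosInr (v₁ : V₁) (v₃ : V₂) : V₂ ↪ V₁ ⊕ {x : V₂ // x ≠ v₃} where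
  toFun z := if h : z = v₃ then .inl v₁ else .inr ⟨z, h⟩
  inj' z z' h := by
    by_cases hz : z = v₃ <;> by_cases hz' : z' = v₃ <;> simp_all

open Classical in
theorem hajosInr_apply (z : V₂) :
    hajosInr v₁ v₃ z = if h : z = v₃ then .inl v₁ else .inr ⟨z, h⟩ := rfl

theorem hajosInr_self : hajosInr v₁ v₃ v₃ = .inl v₁ :=
  dif_pos rfl

theorem hajosInr_of_ne {z : V₂} (h : z ≠ v₃) : hajosInr v₁ v₃ z = .inr ⟨z, h⟩ :=
  dif_neg h

@[simp]
theorem hajosInr_eq_inl_iff {z : V₂} {x : V₁} : hajosInr v₁ v₃ z = .inl x ↔ z = v₃ ∧ x = v₁ := by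
  by_cases hz : z = v₃ <;> simp [hajosInr_apply, hz, eq_comm]

@[simp]
theorem hajosInr_eq_inr_iff {z : V₂} {y : {x : V₂ // x ≠ v₃}} :
    hajosInr v₁ v₃ z = .inr y ↔ z = y := by
  by_cases hz : z = v₃
  · subst hz
    simpa [hajosInr_apply] using fun h => y.2 h.symm
  · simp [hajosInr_apply, hz, Subtype.ext_iff]

theorem hajosJoin_eq_hajosSup (h₃₄ : v₃ ≠ v₄) :
    hajosJoin G₁ G₂ v₁ v₂ v₃ v₄ = hajosSup (G₁.map Function.Embedding.inl) (G₂.map (hajosInr v₁ v₃))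
      (.inl v₁) (.inl v₂) (hajosInr v₁ v₃ v₄) := by
  ext x y
  rcases x with x | x <;> rcases y with y | y <;>
    simp [hajosJoin, hajosSup, edge_adj, hajosInr_of_ne h₃₄.symm, Subtype.ext_iff] <;>
    grind [Adj.ne, adj_comm]

end HajosJoin

theorem stmt_2_general {V₁ V₂ W : Type} [Fintype V₁] [Fintype V₂]
    (k : ℕ) (hk : 2 ≤ k)
    (G₁ : SimpleGraph V₁) (G₂ : SimpleGraph V₂) (G : SimpleGraph W)
    (h₁ : IsCritical k G₁) (h₂ : IsCritical k G₂)
    (hJ : IsHajosJoin G G₁ G₂)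
    (hmax : (∀ v, deg G v ≤ k) ∧ ∃ v, deg G v = k) :
    IsCritical k G := by
  obtain ⟨v₁, v₂, v₃, v₄, h₁₂, h₃₄, ⟨f⟩⟩ := hJ
  have : NeZero k := ⟨by omega⟩
  have hdeg : ∀ w, deg (hajosJoin G₁ G₂ v₁ v₂ v₃ v₄) w ≤ k := fun w =>
    f.symm.deg_eq w ▸ hmax.1 (f.symm w)
  have hdeg' : ∃ w, deg (hajosJoin G₁ G₂ v₁ v₂ v₃ v₄) w = k :=
    let ⟨v, hv⟩ := hmax.2; ⟨f v, (f.deg_eq v).trans hv⟩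
  rw [← f.symm.map_eq]
  refine IsCritical.map _ ?_
  rw [hajosJoin_eq_hajosSup h₃₄.ne] at hdeg hdeg' ⊢
  refine (h₁.map _).hajosSup (h₂.map _) (SimpleGraph.map_adj_apply.2 h₁₂) ?_ ?_ hdeg hdeg'
  · rw [← hajosInr_self (v₃ := v₃)]
    exact SimpleGraph.map_adj_apply.2 h₃₄
  · rw [SimpleGraph.support_map, SimpleGraph.support_map]
    rintro _ ⟨⟨x, -, rfl⟩, ⟨z, -, hz⟩⟩
    rw [(hajosInr_eq_inl_iff.1 hz).2]
    rfl

/-- If `G₁` and `G₂` are `k`-critical graphs and `G` is a Hajós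
join of `G₁` and `G₂` that has maximum degree `k`, then `G` is `k`-critical. -/
theorem stmt_2 {V₁ V₂ W : Type} [Fintype V₁] [Fintype V₂] [Fintype W]
    (k : ℕ) (hk : 2 ≤ k)
    (G₁ : SimpleGraph V₁) (G₂ : SimpleGraph V₂) (G : SimpleGraph W)
    (h₁ : IsCritical k G₁) (h₂ : IsCritical k G₂)
    (hJ : IsHajosJoin G G₁ G₂)
    (hmax : (∀ v, deg G v ≤ k) ∧ ∃ v, deg G v = k) :
    IsCritical k G :=
  stmt_2_general k hk G₁ G₂ G h₁ h₂ hJ hmax
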